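/- There is a constant C depending only on n with the following property. Let S ⊂ ℝ × ℝⁿ be the double cone S := {(−|x|, x) : x ∈ ℝⁿ, x·e₁ ≥ |x| cos(π/8)} ∪ {(|x|, −x) : x ∈ ℝⁿ, x·e₁ ≥ |x| cos(π/8)}. Then for all unit vectors ω₀, ω₁ ∈ ℝⁿ with ω₀·e₁ ≥ cos(π/8) and ω₁·e₁ ≥ cos(π/8), and all x₁ ∈ ℝⁿ: (a) for every t ∈ ℝ, ∫_ℝ (1 + dist((t − t', x₁ + ω₁ t − t' ω₀), S))^{−50n} dt' ≤ C; and (b) for every t' ∈ ℝ, ∫_ℝ (1 + dist((t − t', x₁ + ω₁ t − t' ω₀), S))^{−50n} dt ≤ C. Here dist denotes Euclidean distance in ℝ^{1+n} from a point to the set S. -/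

import Mathlib

/-!
Any two vectors of the cone of aperture `π/8` about `e₁` make an angle at most `π/4`, so
`⟪x, ω⟫ ≥ 0` for `x` in the cone. This makes the lines `s ↦ (a + s, z + s • ω)` cross the double
cone `S` transversally: if `q, q' ∈ S` and `q - q'` is close to `T • (1, ω)`, then `|T|` is
controlled by comparing at `q` and `q'` one of `t + ‖x‖`, `t - ‖x‖` (constant on a sheet, and
growing at unit rate along `(1, ω)` because `⟪x, ω⟫ ≥ 0`), `t`, or `⟪x, ω⟫` (of opposite signs
on the two sheets). So the distance `g` to `S` along the line satisfies
`|s - s'| ≤ 2 (g s + g s')`; comparing with a near-minimiser `r` of `g` gives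
`g s ≥ |s - r| / 4 - 1 / 2`, and the integrand is dominated by `4 ^ N (1 + (s - r) ^ 2)⁻¹`,
whose integral is `4 ^ N π`.
-/

open MeasureTheory Real Set
open scoped RealInnerProductSpace

noncomputable section

abbrev Spc (n : ℕ) := EuclideanSpace ℝ (Fin n)

/-- The first standard basis vector of ℝⁿ. -/
def e1 (n : ℕ) : Spc n :=
  (EuclideanSpace.equiv (Fin n) ℝ).symm (fun i => if (i : ℕ) = 0 then 1 else 0)

/-- Frequency support region for red waves of frequency 1. -/
def redSet (n : ℕ) : Set (Spc n) :=
  {ξ | 1 ≤ ‖ξ‖ ∧ ‖ξ‖ ≤ 2 ∧ (inner ℝ ξ (e1 n) : ℝ) ≥ ‖ξ‖ * Real.cos (π / 8)}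

/-- Frequency support region for blue waves of frequency 2^k. -/
def blueSet (n k : ℕ) : Set (Spc n) :=
  {ξ | (2 : ℝ) ^ k ≤ ‖ξ‖ ∧ ‖ξ‖ ≤ 2 ^ (k + 1) ∧ (inner ℝ ξ (e1 n) : ℝ) ≥ ‖ξ‖ * Real.cos (π / 8)}

/-- The wave with Fourier data `fp` on the upper cone and `fm` on the lower cone. -/
def wave (n : ℕ) (fp fm : Spc n → ℂ) : ℝ × Spc n → ℂ := fun p =>
  (∫ ξ : Spc n, fp ξ * Complex.exp (2 * π * Complex.I * ((p.1 * ‖ξ‖ + (inner ℝ p.2 ξ : ℝ) : ℝ) : ℂ))) +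
  (∫ ξ : Spc n, fm ξ * Complex.exp (2 * π * Complex.I * ((-(p.1 * ‖ξ‖) + (inner ℝ p.2 ξ : ℝ) : ℝ) : ℂ)))

/-- The mass of a wave with data `(fp, fm)`. -/
def mass (n : ℕ) (fp fm : Spc n → ℂ) : ℝ :=
  (∫ ξ : Spc n, ‖fp ξ‖ ^ 2) + (∫ ξ : Spc n, ‖fm ξ‖ ^ 2)

/-- `fp` is admissible data for a red wave of frequency 1. -/
def IsRedData (n : ℕ) (fp : Spc n → ℂ) : Prop :=
  Integrable fp ∧ MemLp fp 2 ∧ ∀ ξ, ξ ∉ redSet n → fp ξ = 0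

/-- `fm` is admissible data for a blue wave of frequency `2^k`. -/
def IsBlueData (n k : ℕ) (fm : Spc n → ℂ) : Prop :=
  Integrable fm ∧ MemLp fm 2 ∧ ∀ ξ, ξ ∉ blueSet n k → fm ξ = 0

/-- Axis-parallel spacetime cube of sidelength `R` centred at `(t₀, x₀)`. -/
def cube (n : ℕ) (t₀ : ℝ) (x₀ : Spc n) (R : ℝ) : Set (ℝ × Spc n) :=
  {p | |p.1 - t₀| ≤ R / 2 ∧ ∀ i, |p.2 i - x₀ i| ≤ R / 2}

/-- `ω` is an admissible tube direction. -/
def IsDir (n : ℕ) (ω : Spc n) : Prop :=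
  ‖ω‖ = 1 ∧ (inner ℝ ω (e1 n) : ℝ) ≥ Real.cos (π / 8)

/-- The `1 × 2^k` tube in direction `(1, ω)`. -/
def tube (n : ℕ) (t₀ : ℝ) (x₀ ω : Spc n) (k : ℕ) : Set (ℝ × Spc n) :=
  {p | |p.1 - t₀| ≤ 2 ^ k ∧ ‖p.2 - x₀ - (p.1 - t₀) • ω‖ ≤ 1}

/-- The infinite tube of radius `r` in direction `(1, ω)`. -/
def tubeR (n : ℕ) (t₀ : ℝ) (x₀ ω : Spc n) (r : ℝ) : Set (ℝ × Spc n) :=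
  {p | ‖p.2 - x₀ - (p.1 - t₀) • ω‖ ≤ r}

/-- The infinite tube in direction `(1, ω)`. -/
def infTube (n : ℕ) (t₀ : ℝ) (x₀ ω : Spc n) : Set (ℝ × Spc n) :=
  tubeR n t₀ x₀ ω 1

/-- Euclidean distance on spacetime `ℝ^{1+n}`. -/
def edist1n (n : ℕ) (p q : ℝ × Spc n) : ℝ :=
  Real.sqrt ((p.1 - q.1) ^ 2 + ‖p.2 - q.2‖ ^ 2)

/-- Euclidean distance from a point to a set in spacetime. -/
def distToSet (n : ℕ) (p : ℝ × Spc n) (S : Set (ℝ × Spc n)) : ℝ :=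
  ⨅ q : S, edist1n n p (q : ℝ × Spc n)

/-- The margin of a red wave of frequency 1 with data `fp`. -/
def margin (n : ℕ) (fp : Spc n → ℂ) : ℝ :=
  ⨅ ξ : Function.support fp, ⨅ ζ : {ζ : Spc n // ζ ∉ redSet n},
    edist1n n (‖(ξ : Spc n)‖, (ξ : Spc n)) (‖(ζ : Spc n)‖, (ζ : Spc n))

/-- `sup {‖φ(t,x)‖ : (t,x) ∈ Ω}`, with the convention `sup ∅ = 0`. -/
def supOn (n : ℕ) (φ : ℝ × Spc n → ℂ) (Ω : Set (ℝ × Spc n)) (t : ℝ) : ℝ :=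
  sSup {r | ∃ x : Spc n, (t, x) ∈ Ω ∧ r = ‖φ (t, x)‖}

/-- The double cone `S` of the mass-removal argument. -/
def doubleCone (n : ℕ) : Set (ℝ × Spc n) :=
  {p | ∃ x : Spc n, (inner ℝ x (e1 n) : ℝ) ≥ ‖x‖ * Real.cos (π / 8) ∧ p = (-‖x‖, x)} ∪
  {p | ∃ x : Spc n, (inner ℝ x (e1 n) : ℝ) ≥ ‖x‖ * Real.cos (π / 8) ∧ p = (‖x‖, -x)}

section InnerProductSpace

variable {E : Type*} [NormedAddCommGroup E] [InnerProductSpace ℝ E]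

def circularCone (e : E) (c : ℝ) : Set E := {x | ‖x‖ * c ≤ ⟪x, e⟫}

def doubleConeOver (K : Set E) : Set (ℝ × E) :=
  {p | ∃ x ∈ K, p = (-‖x‖, x)} ∪ {p | ∃ x ∈ K, p = (‖x‖, -x)}

lemma norm_le_norm_add_of_inner_nonneg {x y : E} (h : 0 ≤ ⟪x, y⟫) : ‖x‖ ≤ ‖x + y‖ := by
  rw [← sq_le_sq₀ (norm_nonneg _) (norm_nonneg _), norm_add_sq_real]
  nlinarith [sq_nonneg ‖y‖]

lemma norm_sub_inner_smul_le_of_mem_circularCone {e x : E} {c : ℝ} (he : ‖e‖ = 1) (hc₀ : 0 ≤ c)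
    (hc : 1 ≤ 2 * c ^ 2) (hx : x ∈ circularCone e c) : ‖x - ⟪x, e⟫ • e‖ ≤ ⟪x, e⟫ := by
  have hxe : 0 ≤ ⟪x, e⟫ := (mul_nonneg (norm_nonneg x) hc₀).trans hx
  rw [← sq_le_sq₀ (norm_nonneg _) hxe, norm_sub_sq_real, real_inner_smul_right, norm_smul, he,
    mul_one, Real.norm_eq_abs, abs_of_nonneg hxe]
  nlinarith [mul_le_mul hx hx (mul_nonneg (norm_nonneg x) hc₀) hxe]

lemma inner_nonneg_of_mem_circularCone {e x y : E} {c : ℝ} (he : ‖e‖ = 1) (hc₀ : 0 ≤ c)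
    (hc : 1 ≤ 2 * c ^ 2) (hx : x ∈ circularCone e c) (hy : y ∈ circularCone e c) :
    0 ≤ ⟪x, y⟫ := by
  have hdecomp : ⟪x, y⟫ = ⟪x, e⟫ * ⟪y, e⟫ + ⟪x - ⟪x, e⟫ • e, y - ⟪y, e⟫ • e⟫ := by
    simp only [inner_sub_left, inner_sub_right, real_inner_smul_left, real_inner_smul_right,
      real_inner_self_eq_norm_sq, he, real_inner_comm e]
    ring
  have hx' := norm_sub_inner_smul_le_of_mem_circularCone he hc₀ hc hx
  have hy' := norm_sub_inner_smul_le_of_mem_circularCone he hc₀ hc hy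
  have hcs := neg_abs_le ⟪x - ⟪x, e⟫ • e, y - ⟪y, e⟫ • e⟫
  have := abs_real_inner_le_norm (x - ⟪x, e⟫ • e) (y - ⟪y, e⟫ • e)
  nlinarith [mul_le_mul hx' hy' (norm_nonneg _) ((norm_nonneg _).trans hx')]

theorem abs_le_of_mem_doubleConeOver {K : Set E} {ω : E} (hω : ‖ω‖ = 1)
    (hK : ∀ x ∈ K, 0 ≤ ⟪x, ω⟫) {q₁ q₂ : ℝ × E} (hq₁ : q₁ ∈ doubleConeOver K)
    (hq₂ : q₂ ∈ doubleConeOver K) (T : ℝ) :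
    |T| ≤ |T - (q₁.1 - q₂.1)| + ‖T • ω - (q₁.2 - q₂.2)‖ := by
  wlog hT : 0 ≤ T generalizing T q₁ q₂
  · have h := this hq₂ hq₁ (-T) (by linarith)
    rwa [abs_neg, show -T - (q₂.1 - q₁.1) = -(T - (q₁.1 - q₂.1)) by ring, abs_neg,
      show (-T) • ω - (q₂.2 - q₁.2) = -(T • ω - (q₁.2 - q₂.2)) by module, norm_neg] at h
  rw [abs_of_nonneg hT]
  have hTω : ∀ x ∈ K, ‖x‖ ≤ ‖x + T • ω‖ := fun x hx =>
    norm_le_norm_add_of_inner_nonneg (by rw [real_inner_smul_right]; exact mul_nonneg hT (hK x hx))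
  rcases hq₁ with ⟨x₁, hx₁, rfl⟩ | ⟨x₁, hx₁, rfl⟩ <;>
    rcases hq₂ with ⟨x₂, hx₂, rfl⟩ | ⟨x₂, hx₂, rfl⟩ <;> dsimp only
  · have := norm_add_le x₁ (T • ω - (x₁ - x₂))
    rw [show x₁ + (T • ω - (x₁ - x₂)) = x₂ + T • ω by abel] at this
    linarith [hTω x₂ hx₂, le_abs_self (T - (-‖x₁‖ - -‖x₂‖))]
  · linarith [le_abs_self (T - (-‖x₁‖ - ‖x₂‖)), norm_nonneg x₁, norm_nonneg x₂,
      norm_nonneg (T • ω - (x₁ - -x₂))]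
  · -- the `ω`-component: `⟪x, ω⟫ ≥ 0` on one sheet and `≤ 0` on the other
    have h := real_inner_le_norm (T • ω - (-x₁ - x₂)) ω
    rw [hω, mul_one, inner_sub_left, real_inner_smul_left, real_inner_self_eq_norm_sq, hω,
      inner_sub_left, inner_neg_left] at h
    linarith [hK x₁ hx₁, hK x₂ hx₂, abs_nonneg (T - (‖x₁‖ - -‖x₂‖))]
  · have := norm_add_le x₂ (T • ω - (-x₁ - -x₂))
    rw [show x₂ + (T • ω - (-x₁ - -x₂)) = x₁ + T • ω by abel] at this
    linarith [hTω x₁ hx₁, le_abs_self (T - (‖x₁‖ - ‖x₂‖))]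

end InnerProductSpace

section Analysis

lemma exists_abs_sub_le_of_abs_sub_le_mul_add {g : ℝ → ℝ} {K : ℝ} (hK : 0 < K)
    (hg : ∀ s s', |s - s'| ≤ K * (g s + g s')) : ∃ r, ∀ s, |s - r| ≤ K * (2 * g s + 1) := by
  have hg₀ : ∀ s, 0 ≤ g s := fun s => by
    have h := hg s s
    rw [sub_self, abs_zero] at h
    nlinarith
  obtain ⟨r, hr⟩ := exists_lt_of_ciInf_lt (lt_add_one (⨅ s, g s))
  refine ⟨r, fun s => ?_⟩
  have hrs : g r ≤ g s + 1 := by linarith [ciInf_le ⟨0, forall_mem_range.2 hg₀⟩ s]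
  nlinarith [hg s r]

lemma rpow_neg_le_mul_inv_one_add_sq {N L w v : ℝ} (hN : 2 ≤ N) (hL : 0 < L) (hw : 0 < w)
    (h : 1 + |v| ≤ L * w) : w ^ (-N) ≤ L ^ N * (1 + v ^ 2)⁻¹ := by
  have hv : 1 ≤ 1 + |v| := le_add_of_nonneg_right (abs_nonneg v)
  calc w ^ (-N) = L ^ N * (L * w) ^ (-N) := by
        rw [mul_rpow hL.le hw.le, rpow_neg hL.le, ← mul_assoc,
          mul_inv_cancel₀ (rpow_pos_of_pos hL N).ne', one_mul]
    _ ≤ L ^ N * (1 + |v|) ^ (-(2 : ℝ)) := by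
        gcongr
        exact (rpow_le_rpow_of_nonpos (by linarith) h (by linarith)).trans
          (rpow_le_rpow_of_exponent_le hv (by linarith))
    _ ≤ L ^ N * (1 + v ^ 2)⁻¹ := by
        rw [rpow_neg (by linarith), rpow_two]
        gcongr
        nlinarith [sq_abs v, abs_nonneg v]

theorem integral_one_add_rpow_neg_le {g : ℝ → ℝ} {K N : ℝ} (hK : 1 ≤ K) (hN : 2 ≤ N)
    (hg : ∀ s s', |s - s'| ≤ K * (g s + g s')) : ∫ s, (1 + g s) ^ (-N) ≤ (2 * K) ^ N * π := by
  obtain ⟨r, hr⟩ := exists_abs_sub_le_of_abs_sub_le_mul_add (by linarith) hg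
  have hpos : ∀ s, 0 < 1 + g s := fun s => by nlinarith [hr s, abs_nonneg (s - r)]
  have hbound : ∀ s, (1 + g s) ^ (-N) ≤ (2 * K) ^ N * (1 + (s - r) ^ 2)⁻¹ := fun s =>
    rpow_neg_le_mul_inv_one_add_sq hN (by linarith) (hpos s) (by nlinarith [hr s])
  calc ∫ s, (1 + g s) ^ (-N) ≤ ∫ s, (2 * K) ^ N * (1 + (s - r) ^ 2)⁻¹ :=
        integral_mono_of_nonneg (ae_of_all _ fun s => rpow_nonneg (hpos s).le _)
          ((integrable_inv_one_add_sq.comp_sub_right r).const_mul _) (ae_of_all _ hbound)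
    _ = (2 * K) ^ N * π := by
        rw [integral_const_mul, integral_sub_right_eq_self (fun u : ℝ => (1 + u ^ 2)⁻¹) r,
          integral_univ_inv_one_add_sq]

end Analysis

section Spacetime

variable {n : ℕ}

lemma norm_e1 (hn : 1 ≤ n) : ‖e1 n‖ = 1 := by
  have : e1 n = EuclideanSpace.single (⟨0, hn⟩ : Fin n) 1 := by
    ext i
    simp [e1, Fin.ext_iff]
  rw [this, PiLp.norm_single, norm_one]

lemma cos_pi_div_eight_nonneg : 0 ≤ cos (π / 8) :=
  cos_nonneg_of_mem_Icc ⟨by linarith [pi_pos], by linarith [pi_pos]⟩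

lemma one_le_two_mul_cos_pi_div_eight_sq : 1 ≤ 2 * cos (π / 8) ^ 2 := by
  have h : 0 ≤ cos (2 * (π / 8)) :=
    cos_nonneg_of_mem_Icc ⟨by linarith [pi_pos], by linarith [pi_pos]⟩
  linarith [cos_two_mul (π / 8)]

lemma doubleCone_eq : doubleCone n = doubleConeOver (circularCone (e1 n) (cos (π / 8))) := rfl

lemma inner_nonneg_of_isDir (hn : 1 ≤ n) {ω : Spc n} (hω : IsDir n ω) :
    ∀ x ∈ circularCone (e1 n) (cos (π / 8)), 0 ≤ ⟪x, ω⟫ := fun _ hx =>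
  inner_nonneg_of_mem_circularCone (norm_e1 hn) cos_pi_div_eight_nonneg
    one_le_two_mul_cos_pi_div_eight_sq hx
    (by rw [circularCone, mem_ofPred_eq, hω.1, one_mul]; exact hω.2)

lemma abs_sub_le_edist1n (p q : ℝ × Spc n) : |p.1 - q.1| ≤ edist1n n p q :=
  Real.abs_le_sqrt (le_add_of_nonneg_right (sq_nonneg _))

lemma norm_sub_le_edist1n (p q : ℝ × Spc n) : ‖p.2 - q.2‖ ≤ edist1n n p q :=
  Real.le_sqrt_of_sq_le (le_add_of_nonneg_left (sq_nonneg _))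

lemma abs_le_two_mul_edist1n_add {K : Set (Spc n)} {ω : Spc n} (hω : ‖ω‖ = 1)
    (hK : ∀ x ∈ K, 0 ≤ ⟪x, ω⟫) {q₁ q₂ : ℝ × Spc n} (hq₁ : q₁ ∈ doubleConeOver K)
    (hq₂ : q₂ ∈ doubleConeOver K) {p p' : ℝ × Spc n} {T : ℝ} (h₁ : p.1 - p'.1 = T)
    (h₂ : p.2 - p'.2 = T • ω) : |T| ≤ 2 * (edist1n n p q₁ + edist1n n p' q₂) := by
  have h := abs_le_of_mem_doubleConeOver hω hK hq₁ hq₂ T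
  rw [← h₂, ← h₁, show p.1 - p'.1 - (q₁.1 - q₂.1) = (p.1 - q₁.1) - (p'.1 - q₂.1) by ring,
    show p.2 - p'.2 - (q₁.2 - q₂.2) = (p.2 - q₁.2) - (p'.2 - q₂.2) by abel, h₁] at h
  linarith [abs_sub (p.1 - q₁.1) (p'.1 - q₂.1), norm_sub_le (p.2 - q₁.2) (p'.2 - q₂.2),
    abs_sub_le_edist1n p q₁, abs_sub_le_edist1n p' q₂, norm_sub_le_edist1n p q₁,
    norm_sub_le_edist1n p' q₂]

lemma le_distToSet_add {S : Set (ℝ × Spc n)} [Nonempty S] {p p' : ℝ × Spc n} {a : ℝ}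
    (h : ∀ q₁ ∈ S, ∀ q₂ ∈ S, a ≤ edist1n n p q₁ + edist1n n p' q₂) :
    a ≤ distToSet n p S + distToSet n p' S :=
  le_ciInf_add_ciInf fun q₁ q₂ => h q₁ q₁.2 q₂ q₂.2

lemma abs_le_two_mul_distToSet_doubleCone_add (hn : 1 ≤ n) {ω : Spc n} (hω : IsDir n ω)
    {p p' : ℝ × Spc n} {T : ℝ} (h₁ : p.1 - p'.1 = T) (h₂ : p.2 - p'.2 = T • ω) :
    |T| ≤ 2 * (distToSet n p (doubleCone n) + distToSet n p' (doubleCone n)) := by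
  have : Nonempty (doubleCone n) := ⟨⟨(-‖(0 : Spc n)‖, 0), Or.inl ⟨0, by simp, rfl⟩⟩⟩
  have h : |T| / 2 ≤ distToSet n p (doubleCone n) + distToSet n p' (doubleCone n) :=
    le_distToSet_add fun q₁ hq₁ q₂ hq₂ => by
      rw [doubleCone_eq] at hq₁ hq₂
      linarith [abs_le_two_mul_edist1n_add hω.1 (inner_nonneg_of_isDir hn hω) hq₁ hq₂ h₁ h₂]
  linarith

end Spacetime

/-- The Schur-test transversality bounds at the end of the mass-removal proposition. -/
theorem schur_transversality (n : ℕ) (hn : 2 ≤ n) :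
    ∃ C : ℝ, 0 < C ∧ ∀ (ω₀ ω₁ x₁ : Spc n), IsDir n ω₀ → IsDir n ω₁ →
      (∀ t : ℝ, (∫ t' : ℝ,
          (1 + distToSet n (t - t', x₁ + t • ω₁ - t' • ω₀) (doubleCone n))
            ^ (-(50 * (n : ℝ)))) ≤ C) ∧
      (∀ t' : ℝ, (∫ t : ℝ,
          (1 + distToSet n (t - t', x₁ + t • ω₁ - t' • ω₀) (doubleCone n))
            ^ (-(50 * (n : ℝ)))) ≤ C) := by
  have hN : (2 : ℝ) ≤ 50 * n := by
    have : (2 : ℝ) ≤ n := by exact_mod_cast hn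
    linarith
  refine ⟨(2 * 2) ^ (50 * (n : ℝ)) * π, by positivity,
    fun ω₀ ω₁ x₁ h₀ h₁ => ⟨fun t => ?_, fun t' => ?_⟩⟩
  · refine integral_one_add_rpow_neg_le one_le_two hN fun s s' => ?_
    rw [abs_sub_comm]
    exact abs_le_two_mul_distToSet_doubleCone_add (by omega) h₀ (by ring) (by module)
  · exact integral_one_add_rpow_neg_le one_le_two hN fun s s' =>
      abs_le_two_mul_distToSet_doubleCone_add (by omega) h₁ (by ring) (by module)

end
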